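/- arXiv:2408.08259 — 4 statements merged into one kernel-verified Lean document; each statement's English description precedes it below -/
import Mathlib

section
/- Let a ≤ L ≤ b be integers with b − a + 1 = 2^ℓ. Then a_ℓ((β_i(L,a,b))_{i∈[1:ℓ]}) = a − L and b_ℓ((β_i(L,a,b))_{i∈[1:ℓ]}) = b − L; that is, the recursively defined endpoint functions applied to the binary string β(L,a,b) recover the orbit shifted by −L. -/
open MeasureTheory

noncomputable section

/-! ### Combinatorial definitions for NUTS orbit selection -/

/-- Floor midpoint `⌊(a+b)/2⌋`. -/
def mid (a b : ℤ) : ℤ := (a + b) / 2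

/-- `(−1)^x` for a bit `x`. -/
def signBit (x : Bool) : ℤ := if x then -1 else 1

/-- Left endpoint `a_ℓ(B)` of the orbit built from the Bernoulli directions `B` (1-indexed). -/
def aEnd (B : ℕ → Bool) : ℕ → ℤ
  | 0 => 0
  | ℓ + 1 => min (aEnd B ℓ) (aEnd B ℓ + signBit (B (ℓ + 1)) * 2 ^ ℓ)

/-- Right endpoint `b_ℓ(B)`. -/
def bEnd (B : ℕ → Bool) : ℕ → ℤ
  | 0 => 0
  | ℓ + 1 => max (bEnd B ℓ) (bEnd B ℓ + signBit (B (ℓ + 1)) * 2 ^ ℓ)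

/-- Proposed extension endpoint `ã_ℓ(B) = a_{ℓ−1}(B) + (−1)^{B_ℓ} 2^{ℓ−1}` (for `ℓ ≥ 1`). -/
def aT (B : ℕ → Bool) (ℓ : ℕ) : ℤ := aEnd B (ℓ - 1) + signBit (B ℓ) * 2 ^ (ℓ - 1)

/-- Proposed extension endpoint `b̃_ℓ(B) = b_{ℓ−1}(B) + (−1)^{B_ℓ} 2^{ℓ−1}` (for `ℓ ≥ 1`). -/
def bT (B : ℕ → Bool) (ℓ : ℕ) : ℤ := bEnd B (ℓ - 1) + signBit (B ℓ) * 2 ^ (ℓ - 1)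

/-- The binary string `β(L,a,b)`: `beta ℓ L a b i` is the `i`-th bit (1-indexed) of
`(β_i(L,a,b))_{i ∈ [1:ℓ]}`, where `[a:b]` is an interval with `b − a + 1 = 2^ℓ`. -/
def beta : ℕ → ℤ → ℤ → ℤ → ℕ → Bool
  | 0, _, _, _, _ => false
  | ℓ + 1, L, a, b, i =>
      if i = ℓ + 1 then decide (mid a b + 1 ≤ L)
      else if mid a b + 1 ≤ L then beta ℓ L (mid a b + 1) b i
      else beta ℓ L a (mid a b) i

/-- The transformed sequence `B*(L,a,b,B)`: bits `1..ℓ` come from `β(L,a,b)`, the rest from `B`. -/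
def bstar (ℓ : ℕ) (L a b : ℤ) (B : ℕ → Bool) : ℕ → Bool :=
  fun i => if 1 ≤ i ∧ i ≤ ℓ then beta ℓ L a b i else B i

/-- The domain `D`: tuples `(B, ℓ, a, b, L)` with `ℓ ∈ [1:M]`, `a = a_ℓ(B)`, `b = b_ℓ(B)`,
`a ≤ L ≤ b`. -/
def memD (M : ℕ) (B : ℕ → Bool) (ℓ : ℕ) (a b L : ℤ) : Prop :=
  1 ≤ ℓ ∧ ℓ ≤ M ∧ a = aEnd B ℓ ∧ b = bEnd B ℓ ∧ a ≤ L ∧ L ≤ b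

/-- The levels of the binary tree of subintervals of `[a:b]`: `treeLevel a b k` is the family of
intervals (coded as pairs) obtained from `[a:b]` by `k` successive halvings; with
`b − a + 1 = 2^ℓ` this is `T_{ℓ−k}([a:b])` of the paper. -/
def treeLevel (a b : ℤ) : ℕ → Set (ℤ × ℤ)
  | 0 => {(a, b)}
  | k + 1 => {p | ∃ q ∈ treeLevel a b k,
      p = (q.1, mid q.1 q.2) ∨ p = (mid q.1 q.2 + 1, q.2)}

/-- The binary tree `T([a:b]) = ∪_{j=0}^{ℓ} T_j([a:b])` of subintervals of an interval `[a:b]`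
with `b − a + 1 = 2^ℓ`. -/
def tree (ℓ : ℕ) (a b : ℤ) : Set (ℤ × ℤ) := ⋃ k ≤ ℓ, treeLevel a b k

/-! ### Leapfrog dynamics -/

/-- The state space `ℝ^d`. -/
abbrev ES (d : ℕ) := EuclideanSpace ℝ (Fin d)

/-- The momentum flip `S(θ,ρ) = (θ,−ρ)`. -/
def flipMom {d : ℕ} (p : ES d × ES d) : ES d × ES d := (p.1, -p.2)

/-- One leapfrog step of size `h` for the potential `U`. -/
def leapfrog {d : ℕ} (U : ES d → ℝ) (h : ℝ) (p : ES d × ES d) : ES d × ES d :=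
  let ρh := p.2 - (h / 2) • gradient U p.1
  let θ' := p.1 + h • ρh
  (θ', ρh - (h / 2) • gradient U θ')

/-- Integer iterates `Φ_h^i`, `i ∈ ℤ`, of the leapfrog integrator (negative iterates use the
inverse `S ∘ Φ_h ∘ S`). -/
def leapfrogIter {d : ℕ} (U : ES d → ℝ) (h : ℝ) : ℤ → ES d × ES d → ES d × ES d
  | Int.ofNat n => (leapfrog U h)^[n]
  | Int.negSucc n => (flipMom ∘ leapfrog U h ∘ flipMom)^[n + 1]

/-- The Hamiltonian `H(θ,ρ) = U(θ) + |ρ|²/2`. -/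
def Ham {d : ℕ} (U : ES d → ℝ) (p : ES d × ES d) : ℝ := U p.1 + (1 / 2) * ‖p.2‖ ^ 2

open Classical in
/-- The U-turn indicator `𝟙_Uturn(a,b,θ,ρ,h,R)` (coarse step size `hs`, fine step `hs/R`). -/
def uturnInd {d : ℕ} (U : ES d → ℝ) (hs : ℝ) (R : ℕ) (a b : ℤ) (p : ES d × ES d) : ℕ :=
  let qm := leapfrogIter U (hs / R) (R * a) p
  let qp := leapfrogIter U (hs / R) (R * b) p
  if (inner ℝ qp.2 (qp.1 - qm.1) : ℝ) < 0 ∨ (inner ℝ qm.2 (qp.1 - qm.1) : ℝ) < 0 then 1 else 0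

/-- The sub-U-turn indicator `𝟙_subUturn(a,b,θ,ρ,h,R)`, defined recursively by halving. -/
def subUturnInd {d : ℕ} (U : ES d → ℝ) (hs : ℝ) (R : ℕ) (p : ES d × ES d) (a b : ℤ) : ℕ :=
  if h : a < b then
    max (max (subUturnInd U hs R p a (mid a b)) (subUturnInd U hs R p (mid a b + 1) b))
      (uturnInd U hs R a b p)
  else 0
termination_by (b - a).toNat
decreasing_by
  · have h1 : a ≤ mid a b := by unfold mid; omega
    have h2 : mid a b < b := by unfold mid; omega
    omega
  · have h1 : a ≤ mid a b := by unfold mid; omega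
    have h2 : mid a b < b := by unfold mid; omega
    omega

/-- The number of doublings `ℓ_min(θ,ρ,B,h,R)` selected by the no-U-turn procedure with at most
`2^M` leapfrog iterates. -/
def ellMin {d : ℕ} (U : ES d → ℝ) (hs : ℝ) (R : ℕ) (M : ℕ) (B : ℕ → Bool)
    (p : ES d × ES d) : ℕ :=
  sInf ({ℓ | 1 ≤ ℓ ∧ ℓ ≤ M - 1 ∧
      (uturnInd U hs R (aEnd B ℓ) (bEnd B ℓ) p = 1 ∨
        subUturnInd U hs R p (aT B (ℓ + 1)) (bT B (ℓ + 1)) = 1)} ∪ {M})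

/-- The categorical (Boltzmann) index-selection kernel `Q(L | θ, ρ, a, b, h, R)`. -/
def Qkernel {d : ℕ} (U : ES d → ℝ) (hs : ℝ) (R : ℕ) (p : ES d × ES d)
    (a b L : ℤ) : ℝ :=
  if a ≤ L ∧ L ≤ b then
    Real.exp (-Ham U (leapfrogIter U (hs / R) (R * L) p)) /
      ∑ k ∈ Finset.Icc a b, Real.exp (-Ham U (leapfrogIter U (hs / R) (R * k) p))
  else 0

/-! ### The standard normal target -/

/-- One leapfrog step of size `h` for the standard normal potential `U(θ) = |θ|²/2`
(for which `∇U(θ) = θ`). -/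
def gaussLeapfrog {d : ℕ} (h : ℝ) (p : ES d × ES d) : ES d × ES d :=
  let ρh := p.2 - (h / 2) • p.1
  let θ' := p.1 + h • ρh
  (θ', ρh - (h / 2) • θ')

/-- Integer iterates of the standard normal leapfrog integrator. -/
def gaussLeapfrogIter {d : ℕ} (h : ℝ) : ℤ → ES d × ES d → ES d × ES d
  | Int.ofNat n => (gaussLeapfrog h)^[n]
  | Int.negSucc n => (flipMom ∘ gaussLeapfrog h ∘ flipMom)^[n + 1]

/-- The standard normal Hamiltonian `H(θ,ρ) = (|θ|² + |ρ|²)/2`. -/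
def gaussHam {d : ℕ} (p : ES d × ES d) : ℝ := (1 / 2) * (‖p.1‖ ^ 2 + ‖p.2‖ ^ 2)

/-- The modified Hamiltonian `H_h(θ,ρ) = (1 − h²/4)|θ|²/2 + |ρ|²/2` preserved by the standard
normal leapfrog integrator for `h ∈ (0,2)`. -/
def gaussHamMod {d : ℕ} (h : ℝ) (p : ES d × ES d) : ℝ :=
  (1 / 2) * (1 - h ^ 2 / 4) * ‖p.1‖ ^ 2 + (1 / 2) * ‖p.2‖ ^ 2

end

/-! The bits of `β(L,a,b)` record, from the top level down, which half of the current dyadic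
interval contains `L`. Choosing the upper half (bit `1`) extends the orbit by `2^k` to the left and
choosing the lower half extends it to the right, so by induction on `ℓ` the orbit grown by
`β(L,a,b)` around `0` is exactly `[a:b]` seen from `L`. -/

section Endpoints

variable {B B' : ℕ → Bool} {n : ℕ}

lemma aEnd_congr (h : ∀ i, 1 ≤ i → i ≤ n → B i = B' i) : aEnd B n = aEnd B' n := by
  induction n with
  | zero => rfl
  | succ k ih =>
    simp only [aEnd, ih fun i h1 h2 => h i h1 (by omega), h (k + 1) (by omega) le_rfl]

lemma bEnd_congr (h : ∀ i, 1 ≤ i → i ≤ n → B i = B' i) : bEnd B n = bEnd B' n := by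
  induction n with
  | zero => rfl
  | succ k ih =>
    simp only [bEnd, ih fun i h1 h2 => h i h1 (by omega), h (k + 1) (by omega) le_rfl]

lemma aEnd_succ_of_true (h : B (n + 1) = true) : aEnd B (n + 1) = aEnd B n - 2 ^ n := by
  have : (0 : ℤ) < 2 ^ n := by positivity
  simp only [aEnd, h, signBit, if_true]
  omega

lemma bEnd_succ_of_true (h : B (n + 1) = true) : bEnd B (n + 1) = bEnd B n := by
  have : (0 : ℤ) < 2 ^ n := by positivity
  simp only [bEnd, h, signBit, if_true]
  omega

lemma aEnd_succ_of_false (h : B (n + 1) = false) : aEnd B (n + 1) = aEnd B n := by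
  have : (0 : ℤ) < 2 ^ n := by positivity
  simp only [aEnd, h, signBit, Bool.false_eq_true, if_false]
  omega

lemma bEnd_succ_of_false (h : B (n + 1) = false) : bEnd B (n + 1) = bEnd B n + 2 ^ n := by
  have : (0 : ℤ) < 2 ^ n := by positivity
  simp only [bEnd, h, signBit, Bool.false_eq_true, if_false]
  omega

end Endpoints

section Beta

variable {k i : ℕ} {L a b : ℤ}

lemma beta_succ_self : beta (k + 1) L a b (k + 1) = decide (mid a b + 1 ≤ L) := by
  simp [beta]

lemma beta_succ_of_mid_lt (hi : i ≤ k) (hL : mid a b + 1 ≤ L) :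
    beta (k + 1) L a b i = beta k L (mid a b + 1) b i := by
  simp [beta, show i ≠ k + 1 by omega, hL]

lemma beta_succ_of_le_mid (hi : i ≤ k) (hL : ¬ mid a b + 1 ≤ L) :
    beta (k + 1) L a b i = beta k L a (mid a b) i := by
  simp [beta, show i ≠ k + 1 by omega, hL]

end Beta

section Halving

variable {a b : ℤ} {k : ℕ}

lemma mid_sub_add_one_of_card (h : b - a + 1 = 2 ^ (k + 1)) : mid a b - a + 1 = 2 ^ k := by
  rw [pow_succ] at h
  unfold mid
  omega

lemma sub_mid_of_card (h : b - a + 1 = 2 ^ (k + 1)) : b - mid a b = 2 ^ k := by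
  rw [pow_succ] at h
  unfold mid
  omega

end Halving

/-- The endpoint functions applied to the binary string `β(L,a,b)` recover the
orbit shifted by `−L`: `a_ℓ(β(L,a,b)) = a − L` and `b_ℓ(β(L,a,b)) = b − L`. -/
theorem beta_initial_point_symmetry (a b L : ℤ) (ℓ : ℕ) (h1 : a ≤ L) (h2 : L ≤ b)
    (hsize : b - a + 1 = 2 ^ ℓ) :
    aEnd (beta ℓ L a b) ℓ = a - L ∧ bEnd (beta ℓ L a b) ℓ = b - L := by
  induction ℓ generalizing a b L with
  | zero =>
    rw [pow_zero] at hsize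
    constructor <;> simp only [aEnd, bEnd] <;> omega
  | succ k ih =>
    have hlow := mid_sub_add_one_of_card hsize
    have hhigh := sub_mid_of_card hsize
    by_cases hL : mid a b + 1 ≤ L
    · obtain ⟨ha, hb⟩ := ih (mid a b + 1) b L hL h2 (by omega)
      have hbits : ∀ i, 1 ≤ i → i ≤ k → beta (k + 1) L a b i = beta k L (mid a b + 1) b i :=
        fun _ _ hi => beta_succ_of_mid_lt hi hL
      have htop : beta (k + 1) L a b (k + 1) = true := by simpa [beta_succ_self] using hL
      rw [aEnd_succ_of_true htop, bEnd_succ_of_true htop, aEnd_congr hbits, bEnd_congr hbits]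
      omega
    · obtain ⟨ha, hb⟩ := ih a (mid a b) L h1 (by omega) hlow
      have hbits : ∀ i, 1 ≤ i → i ≤ k → beta (k + 1) L a b i = beta k L a (mid a b) i :=
        fun _ _ hi => beta_succ_of_le_mid hi hL
      have htop : beta (k + 1) L a b (k + 1) = false := by simpa [beta_succ_self] using hL
      rw [aEnd_succ_of_false htop, bEnd_succ_of_false htop, aEnd_congr hbits, bEnd_congr hbits]
      omega
end

section
/- Let a ≤ L ≤ b be integers with b − a + 1 = 2^ℓ, let M ≥ ℓ, B ∈ {0,1}^M, and write B* = B*(L,a,b,B). Then for every j with 0 ≤ j ≤ ℓ, T([a_j(B*) + L : b_j(B*) + L]) ⊆ T([a:b]). -/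
open MeasureTheory

/-! The first bit of `β(L,a,b)` records in which half of `[a:b]` the point `L` lies and the
remaining bits are `β` of that half, so by induction on `ℓ` the interval
`[a_j(β)+L : b_j(β)+L]` is the node of depth `ℓ - j` of the halving tree of `[a:b]` that
contains `L`. Since `a_j`, `b_j` only read the bits `1..j`, on which `B*` agrees with `β`, and
the subtree of a node lies in the tree of `[a:b]`, the theorem follows. -/

lemma aEnd_congr_s7 {B B' : ℕ → Bool} {j : ℕ} (h : Set.EqOn B B' (Set.Icc 1 j)) :
    aEnd B j = aEnd B' j := by
  induction j with
  | zero => rfl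
  | succ n ih =>
    rw [aEnd, aEnd, ih (h.mono (Set.Icc_subset_Icc_right n.le_succ)), h ⟨n.succ_pos, le_rfl⟩]

lemma bEnd_congr_s7 {B B' : ℕ → Bool} {j : ℕ} (h : Set.EqOn B B' (Set.Icc 1 j)) :
    bEnd B j = bEnd B' j := by
  induction j with
  | zero => rfl
  | succ n ih =>
    rw [bEnd, bEnd, ih (h.mono (Set.Icc_subset_Icc_right n.le_succ)), h ⟨n.succ_pos, le_rfl⟩]

lemma treeLevel_add {a b : ℤ} {p : ℤ × ℤ} {k : ℕ} (hp : p ∈ treeLevel a b k) :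
    ∀ k', treeLevel p.1 p.2 k' ⊆ treeLevel a b (k + k')
  | 0, q, hq => by rw [treeLevel, Set.mem_singleton_iff] at hq; exact hq ▸ hp
  | k' + 1, _, ⟨q, hq, hpq⟩ => ⟨q, treeLevel_add hp k' hq, hpq⟩

lemma tree_subset_tree_of_mem_treeLevel {a b : ℤ} {p : ℤ × ℤ} {k : ℕ}
    (hp : p ∈ treeLevel a b k) (j : ℕ) : tree j p.1 p.2 ⊆ tree (k + j) a b := by
  simp only [tree, Set.iUnion_subset_iff]
  intro i hi
  exact (treeLevel_add hp i).trans
    (Set.subset_iUnion₂ (s := fun k _ => treeLevel a b k) (k + i) (by omega))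

def halfOf (L a b : ℤ) : ℤ × ℤ :=
  if mid a b + 1 ≤ L then (mid a b + 1, b) else (a, mid a b)

lemma halfOf_mem_treeLevel_one (L a b : ℤ) : halfOf L a b ∈ treeLevel a b 1 := by
  unfold halfOf; split_ifs <;> exact ⟨(a, b), rfl, by simp⟩

lemma halfOf_spec {n : ℕ} {a b L : ℤ} (hsize : b - a + 1 = 2 ^ (n + 1)) (h1 : a ≤ L)
    (h2 : L ≤ b) :
    (halfOf L a b).2 - (halfOf L a b).1 + 1 = 2 ^ n ∧
      (halfOf L a b).1 ≤ L ∧ L ≤ (halfOf L a b).2 := by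
  have : (2 : ℤ) ^ (n + 1) = 2 * 2 ^ n := by ring
  unfold halfOf mid; split_ifs <;> simp only <;> omega

lemma beta_succ_of_le {ℓ i : ℕ} (hi : i ≤ ℓ) (L a b : ℤ) :
    beta (ℓ + 1) L a b i = beta ℓ L (halfOf L a b).1 (halfOf L a b).2 i := by
  rw [beta, if_neg (by omega), halfOf]
  split_ifs <;> rfl

lemma endpoints_beta_succ {n : ℕ} {a b L : ℤ} (hsize : b - a + 1 = 2 ^ (n + 1))
    (hA : aEnd (beta (n + 1) L a b) n + L = (halfOf L a b).1)
    (hB : bEnd (beta (n + 1) L a b) n + L = (halfOf L a b).2) :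
    aEnd (beta (n + 1) L a b) (n + 1) + L = a ∧ bEnd (beta (n + 1) L a b) (n + 1) + L = b := by
  have : (2 : ℤ) ^ (n + 1) = 2 * 2 ^ n := by ring
  have : (0 : ℤ) < 2 ^ n := by positivity
  rw [aEnd, bEnd, beta, if_pos rfl]
  unfold halfOf at hA hB
  by_cases hc : mid a b + 1 ≤ L
  · rw [if_pos hc] at hA hB
    simp only [hc, decide_true, signBit, if_true]
    unfold mid at hA hB
    omega
  · rw [if_neg hc] at hA hB
    simp only [hc, decide_false, signBit, Bool.false_eq_true, if_false]
    unfold mid at hA hB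
    omega

theorem shift_endpoints_beta_mem_treeLevel {ℓ j : ℕ} {a b L : ℤ} (hsize : b - a + 1 = 2 ^ ℓ)
    (h1 : a ≤ L) (h2 : L ≤ b) (hj : j ≤ ℓ) :
    (aEnd (beta ℓ L a b) j + L, bEnd (beta ℓ L a b) j + L) ∈ treeLevel a b (ℓ - j) := by
  induction ℓ generalizing a b j with
  | zero =>
    obtain rfl : j = 0 := by omega
    simp only [aEnd, bEnd, zero_add, Nat.sub_self, treeLevel, Set.mem_singleton_iff, Prod.ext_iff]
    omega
  | succ n ih =>
    obtain ⟨hsize', h1', h2'⟩ := halfOf_spec hsize h1 h2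
    have hcongr {k : ℕ} (hk : k ≤ n) :
        Set.EqOn (beta (n + 1) L a b) (beta n L (halfOf L a b).1 (halfOf L a b).2)
          (Set.Icc 1 k) :=
      fun i hi => beta_succ_of_le (hi.2.trans hk) L a b
    rcases hj.lt_or_eq with hj | rfl
    · rw [aEnd_congr_s7 (hcongr (by omega)), bEnd_congr_s7 (hcongr (by omega)),
        show n + 1 - j = 1 + (n - j) by omega]
      exact treeLevel_add (halfOf_mem_treeLevel_one L a b) _ (ih hsize' h1' h2' (by omega))
    · have hhalf := ih hsize' h1' h2' le_rfl
      rw [Nat.sub_self, treeLevel, Set.mem_singleton_iff, Prod.ext_iff,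
        ← aEnd_congr_s7 (hcongr le_rfl), ← bEnd_congr_s7 (hcongr le_rfl)] at hhalf
      obtain ⟨hA, hB⟩ := endpoints_beta_succ hsize hhalf.1 hhalf.2
      rw [hA, hB, Nat.sub_self]
      rfl

theorem tree_bstar_subset_general (ℓ : ℕ) (B : ℕ → Bool) (a b L : ℤ)
    (h1 : a ≤ L) (h2 : L ≤ b) (hsize : b - a + 1 = 2 ^ ℓ) :
    ∀ j ≤ ℓ,
      tree j (aEnd (bstar ℓ L a b B) j + L) (bEnd (bstar ℓ L a b B) j + L) ⊆ tree ℓ a b := by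
  intro j hj
  have hbits : Set.EqOn (bstar ℓ L a b B) (beta ℓ L a b) (Set.Icc 1 j) :=
    fun i hi => if_pos ⟨hi.1, hi.2.trans hj⟩
  rw [aEnd_congr_s7 hbits, bEnd_congr_s7 hbits]
  simpa [Nat.sub_add_cancel hj] using
    tree_subset_tree_of_mem_treeLevel (shift_endpoints_beta_mem_treeLevel hsize h1 h2 hj) j

/-- For `a ≤ L ≤ b` with `b − a + 1 = 2^ℓ`, `M ≥ ℓ`, `B ∈ {0,1}^M` and
`B* = B*(L,a,b,B)`: for every `0 ≤ j ≤ ℓ`, `T([a_j(B*)+L : b_j(B*)+L]) ⊆ T([a:b])`. -/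
theorem tree_bstar_subset (M ℓ : ℕ) (hℓM : ℓ ≤ M) (B : ℕ → Bool) (a b L : ℤ)
    (h1 : a ≤ L) (h2 : L ≤ b) (hsize : b - a + 1 = 2 ^ ℓ) :
    ∀ j ≤ ℓ,
      tree j (aEnd (bstar ℓ L a b B) j + L) (bEnd (bstar ℓ L a b B) j + L) ⊆ tree ℓ a b :=
  tree_bstar_subset_general ℓ B a b L h1 h2 hsize
end

section
/- Let (θ,ρ) ∈ ℝ^{2d}, h > 0, R ≥ 1, M ∈ ℕ, B ∈ {0,1}^M, and write ℓ_min = ℓ_min(θ,ρ,B,h,R). Then for every ℓ < ℓ_min, the collection T([a_ℓ(B) : b_ℓ(B)]) is sub-U-turn free for (θ,ρ,h,R); that is, 𝟙_Uturn(ã,b̃,θ,ρ,h,R) = 0 for all [ã:b̃] ∈ T([a_ℓ(B) : b_ℓ(B)]). -/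
open MeasureTheory

/-!
The orbit `[a_{ℓ+1} : b_{ℓ+1}]` is split at its midpoint into the old orbit `[a_ℓ : b_ℓ]` and the
extension `[ã_{ℓ+1} : b̃_{ℓ+1}]`. Below `ℓ_min` neither the orbit nor the extension shows a
(sub-)U-turn, so by induction on `ℓ` the sub-U-turn indicator of `[a_ℓ : b_ℓ]` vanishes. Unfolding
the recursion of that indicator along the halving tree shows that no interval of
`T([a_ℓ : b_ℓ])` has a U-turn.
-/

lemma mid_bounds {a b : ℤ} (hab : a < b) : a ≤ mid a b ∧ mid a b < b := by
  unfold mid; omega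

lemma bEnd_eq_aEnd_add (B : ℕ → Bool) (ℓ : ℕ) : bEnd B ℓ = aEnd B ℓ + 2 ^ ℓ - 1 := by
  induction ℓ with
  | zero => rfl
  | succ n ih =>
    have hpow : (2 : ℤ) ^ (n + 1) = 2 ^ n + 2 ^ n := by ring
    have hpos : (0 : ℤ) < 2 ^ n := by positivity
    simp only [aEnd, bEnd, signBit]
    cases B (n + 1) <;> simp only [if_true, if_false, Bool.false_eq_true] <;> omega

lemma aEnd_lt_bEnd (B : ℕ → Bool) {ℓ : ℕ} (hℓ : 1 ≤ ℓ) : aEnd B ℓ < bEnd B ℓ := by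
  have h2 : (2 : ℤ) ≤ 2 ^ ℓ := le_self_pow₀ (by norm_num) (by omega)
  linarith [bEnd_eq_aEnd_add B ℓ]

lemma orbit_halves (B : ℕ → Bool) (ℓ : ℕ) :
    let m := mid (aEnd B (ℓ + 1)) (bEnd B (ℓ + 1))
    (aEnd B (ℓ + 1) = aEnd B ℓ ∧ m = bEnd B ℓ ∧ m + 1 = aT B (ℓ + 1) ∧
        bEnd B (ℓ + 1) = bT B (ℓ + 1)) ∨
      (aEnd B (ℓ + 1) = aT B (ℓ + 1) ∧ m = bT B (ℓ + 1) ∧ m + 1 = aEnd B ℓ ∧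
        bEnd B (ℓ + 1) = bEnd B ℓ) := by
  have hb := bEnd_eq_aEnd_add B ℓ
  have hpos : (0 : ℤ) < 2 ^ ℓ := by positivity
  cases hB : B (ℓ + 1)
  · left
    simp only [aEnd, bEnd, aT, bT, signBit, mid, hB, Nat.add_sub_cancel, if_false,
      Bool.false_eq_true]
    omega
  · right
    simp only [aEnd, bEnd, aT, bT, signBit, mid, hB, Nat.add_sub_cancel, if_true]
    omega

lemma length_of_mem_treeLevel {ℓ k : ℕ} {a b : ℤ} (hab : b - a + 1 = 2 ^ ℓ) (hk : k ≤ ℓ)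
    {q : ℤ × ℤ} (hq : q ∈ treeLevel a b k) : q.2 - q.1 + 1 = 2 ^ (ℓ - k) := by
  induction k generalizing q with
  | zero => simp_all [treeLevel]
  | succ k ih =>
    obtain ⟨r, hr, hchild⟩ := hq
    have hlen := ih (by omega) hr
    have hpow : (2 : ℤ) ^ (ℓ - k) = 2 ^ (ℓ - (k + 1)) + 2 ^ (ℓ - (k + 1)) := by
      rw [show ℓ - k = ℓ - (k + 1) + 1 by omega]; ring
    have hpos : (0 : ℤ) < 2 ^ (ℓ - (k + 1)) := by positivity
    have hmid : mid r.1 r.2 = r.1 + 2 ^ (ℓ - (k + 1)) - 1 := by unfold mid; omega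
    rcases hchild with rfl | rfl <;> simp only [hmid] <;> omega

section Indicators

variable {d : ℕ} (U : ES d → ℝ) (hs : ℝ) (R : ℕ) (p : ES d × ES d)

lemma uturnInd_le_one (a b : ℤ) : uturnInd U hs R a b p ≤ 1 := by
  simp only [uturnInd]; split <;> simp

lemma uturnInd_self (a : ℤ) : uturnInd U hs R a a p = 0 := by
  simp [uturnInd]

lemma subUturnInd_of_le {a b : ℤ} (hba : b ≤ a) : subUturnInd U hs R p a b = 0 := by
  rw [subUturnInd, dif_neg (not_lt.mpr hba)]

lemma subUturnInd_eq_zero_iff {a b : ℤ} (hab : a < b) :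
    subUturnInd U hs R p a b = 0 ↔
      subUturnInd U hs R p a (mid a b) = 0 ∧ subUturnInd U hs R p (mid a b + 1) b = 0 ∧
        uturnInd U hs R a b p = 0 := by
  rw [subUturnInd, dif_pos hab]
  omega

lemma subUturnInd_le_one (a b : ℤ) : subUturnInd U hs R p a b ≤ 1 := by
  rw [subUturnInd]
  split
  · have := subUturnInd_le_one a (mid a b)
    have := subUturnInd_le_one (mid a b + 1) b
    have := uturnInd_le_one U hs R p a b
    omega
  · exact zero_le_one
termination_by (b - a).toNat
decreasing_by all_goals have := mid_bounds ‹a < b›; omega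

lemma uturnInd_eq_zero_of_subUturnInd_eq_zero {a b : ℤ} (hab : a ≤ b)
    (h : subUturnInd U hs R p a b = 0) : uturnInd U hs R a b p = 0 := by
  rcases hab.lt_or_eq with hlt | rfl
  · exact ((subUturnInd_eq_zero_iff U hs R p hlt).mp h).2.2
  · exact uturnInd_self U hs R p a

lemma subUturnInd_eq_zero_of_mem_treeLevel {a b : ℤ} (h : subUturnInd U hs R p a b = 0)
    {k : ℕ} {q : ℤ × ℤ} (hq : q ∈ treeLevel a b k) : subUturnInd U hs R p q.1 q.2 = 0 := by
  induction k generalizing q with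
  | zero => simp_all [treeLevel]
  | succ k ih =>
    obtain ⟨r, hr, hchild⟩ := hq
    have hr0 := ih hr
    rcases lt_or_ge r.1 r.2 with hlt | hge
    · obtain ⟨hleft, hright, -⟩ := (subUturnInd_eq_zero_iff U hs R p hlt).mp hr0
      rcases hchild with rfl | rfl
      exacts [hleft, hright]
    · -- the halves of a degenerate interval are degenerate
      have : r.2 ≤ mid r.1 r.2 ∧ mid r.1 r.2 ≤ r.1 := by unfold mid; omega
      rcases hchild with rfl | rfl <;> apply subUturnInd_of_le <;> dsimp only <;> omega

lemma uturnInd_eq_zero_of_mem_tree {ℓ : ℕ} {a b : ℤ} (hab : b - a + 1 = 2 ^ ℓ)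
    (h : subUturnInd U hs R p a b = 0) {q : ℤ × ℤ} (hq : q ∈ tree ℓ a b) :
    uturnInd U hs R q.1 q.2 p = 0 := by
  simp only [tree, Set.mem_iUnion] at hq
  obtain ⟨k, hk, hqk⟩ := hq
  have hlen := length_of_mem_treeLevel hab hk hqk
  have hpos : (0 : ℤ) < 2 ^ (ℓ - k) := by positivity
  exact uturnInd_eq_zero_of_subUturnInd_eq_zero U hs R p (by omega)
    (subUturnInd_eq_zero_of_mem_treeLevel U hs R p h hqk)

variable (M : ℕ) (B : ℕ → Bool)

lemma ellMin_le : ellMin U hs R M B p ≤ M :=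
  Nat.sInf_le (Or.inr rfl)

lemma no_uturn_of_lt_ellMin {j : ℕ} (hj1 : 1 ≤ j) (hj : j < ellMin U hs R M B p) :
    uturnInd U hs R (aEnd B j) (bEnd B j) p = 0 ∧
      subUturnInd U hs R p (aT B (j + 1)) (bT B (j + 1)) = 0 := by
  have hjM : j ≤ M - 1 := by have := ellMin_le U hs R p M B; omega
  have hturn := uturnInd_le_one U hs R p (aEnd B j) (bEnd B j)
  have hsub := subUturnInd_le_one U hs R p (aT B (j + 1)) (bT B (j + 1))
  by_contra hcon
  have hle : ellMin U hs R M B p ≤ j := Nat.sInf_le (Or.inl ⟨hj1, hjM, by omega⟩)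
  omega

lemma subUturnInd_orbit_eq_zero {ℓ : ℕ} (hℓ : ℓ < ellMin U hs R M B p) :
    subUturnInd U hs R p (aEnd B ℓ) (bEnd B ℓ) = 0 := by
  induction ℓ with
  | zero => exact subUturnInd_of_le U hs R p le_rfl
  | succ n ih =>
    have hext : subUturnInd U hs R p (aT B (n + 1)) (bT B (n + 1)) = 0 := by
      rcases Nat.eq_zero_or_pos n with rfl | hn
      · exact subUturnInd_of_le U hs R p (show aT B 1 = bT B 1 from rfl).ge
      · exact (no_uturn_of_lt_ellMin U hs R p M B hn (by omega)).2
    have hold := ih (by omega)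
    obtain ⟨hleft, hright⟩ :
        subUturnInd U hs R p (aEnd B (n + 1)) (mid (aEnd B (n + 1)) (bEnd B (n + 1))) = 0 ∧
          subUturnInd U hs R p (mid (aEnd B (n + 1)) (bEnd B (n + 1)) + 1) (bEnd B (n + 1)) = 0 :=
        by
      rcases orbit_halves B n with ⟨ha, hm, hm', hb⟩ | ⟨ha, hm, hm', hb⟩
      · rw [hm', hm, ha, hb]; exact ⟨hold, hext⟩
      · rw [hm', hm, ha, hb]; exact ⟨hext, hold⟩
    exact (subUturnInd_eq_zero_iff U hs R p (aEnd_lt_bEnd B (by omega))).mpr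
      ⟨hleft, hright, (no_uturn_of_lt_ellMin U hs R p M B (by omega) hℓ).1⟩

end Indicators

theorem tree_uturn_free_below_ellMin_general {d : ℕ} (U : ES d → ℝ)
    (hs : ℝ) (R : ℕ) (M : ℕ) (B : ℕ → Bool) (p : ES d × ES d) :
    ∀ ℓ < ellMin U hs R M B p, ∀ q ∈ tree ℓ (aEnd B ℓ) (bEnd B ℓ),
      uturnInd U hs R q.1 q.2 p = 0 := by
  intro ℓ hℓ q hq
  have hlen : bEnd B ℓ - aEnd B ℓ + 1 = 2 ^ ℓ := by rw [bEnd_eq_aEnd_add]; ring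
  exact uturnInd_eq_zero_of_mem_tree U hs R p hlen
    (subUturnInd_orbit_eq_zero U hs R p M B hℓ) hq

/-- For every `ℓ < ℓ_min(θ,ρ,B,h,R)`, the tree `T([a_ℓ(B) : b_ℓ(B)])` is
sub-U-turn free: no interval in it has a U-turn. -/
theorem tree_uturn_free_below_ellMin {d : ℕ} (U : ES d → ℝ) (hU : ContDiff ℝ 1 U)
    (hs : ℝ) (hhs : 0 < hs) (R : ℕ) (hR : 1 ≤ R) (M : ℕ) (B : ℕ → Bool) (p : ES d × ES d) :
    ∀ ℓ < ellMin U hs R M B p, ∀ q ∈ tree ℓ (aEnd B ℓ) (bEnd B ℓ),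
      uturnInd U hs R q.1 q.2 p = 0 :=
  tree_uturn_free_below_ellMin_general U hs R M B p
end

section
/- For the standard normal target in dimension d, h ∈ (0,2), and any (θ,ρ) ∈ ℝ^{2d}, the Hamiltonian evaluated along the two-sided leapfrog path through (θ,ρ) satisfies, uniformly in i ∈ ℤ: (1/2)((1 − h²/4)|θ|² + |ρ|²) ≤ H(Φ_h^i(θ,ρ)) ≤ (1/2)(|θ|² + (1 − h²/4)^{−1}|ρ|²). -/
open MeasureTheory

/-! For the Gaussian target the leapfrog step is linear and preserves the modified Hamiltonian
`H_h = ((1 − h²/4)|θ|² + |ρ|²)/2` exactly, and so does the momentum flip; hence `H_h` is constant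
along the whole two-sided path. Since `(1 − h²/4) H ≤ H_h ≤ H`, the value of `H` at `Φ_h^i(θ,ρ)` is
squeezed between `H_h(θ,ρ)` and `H_h(θ,ρ) / (1 − h²/4)`, which are the two bounds. -/

lemma norm_smul_add_smul_sq {E : Type*} [NormedAddCommGroup E] [InnerProductSpace ℝ E]
    (a b : ℝ) (x y : E) :
    ‖a • x + b • y‖ ^ 2 = a ^ 2 * ‖x‖ ^ 2 + 2 * a * b * inner ℝ x y + b ^ 2 * ‖y‖ ^ 2 := by
  rw [norm_add_sq_real, norm_smul, norm_smul, real_inner_smul_left, real_inner_smul_right,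
    mul_pow, mul_pow, Real.norm_eq_abs, Real.norm_eq_abs, sq_abs, sq_abs]
  ring

section GaussLeapfrog

variable {d : ℕ} (h : ℝ)

lemma gaussLeapfrog_fst (p : ES d × ES d) :
    (gaussLeapfrog h p).1 = (1 - h ^ 2 / 2) • p.1 + h • p.2 := by
  simp only [gaussLeapfrog, smul_sub, smul_smul]
  module

lemma gaussLeapfrog_snd (p : ES d × ES d) :
    (gaussLeapfrog h p).2 = (-(h - h ^ 3 / 4)) • p.1 + (1 - h ^ 2 / 2) • p.2 := by
  simp only [gaussLeapfrog, smul_add, smul_sub, smul_smul]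
  module

lemma gaussHamMod_gaussLeapfrog (p : ES d × ES d) :
    gaussHamMod h (gaussLeapfrog h p) = gaussHamMod h p := by
  rw [gaussHamMod, gaussHamMod, gaussLeapfrog_fst, gaussLeapfrog_snd, norm_smul_add_smul_sq,
    norm_smul_add_smul_sq]
  ring

lemma gaussHamMod_flipMom (p : ES d × ES d) : gaussHamMod h (flipMom p) = gaussHamMod h p := by
  simp only [gaussHamMod, flipMom, norm_neg]

lemma gaussHamMod_gaussLeapfrogIter (i : ℤ) (p : ES d × ES d) :
    gaussHamMod h (gaussLeapfrogIter h i p) = gaussHamMod h p := by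
  have step : Function.Semiconj (gaussHamMod h) (gaussLeapfrog (d := d) h) id :=
    gaussHamMod_gaussLeapfrog h
  have flip : Function.Semiconj (gaussHamMod h) (flipMom (d := d)) id := gaussHamMod_flipMom h
  have backStep : Function.Semiconj (gaussHamMod h) (flipMom ∘ gaussLeapfrog (d := d) h ∘ flipMom)
      id :=
    flip.comp_right (step.comp_right flip)
  cases i with
  | ofNat n => exact ((step.iterate_right n).eq p).trans (congrFun (Function.iterate_id n) _)
  | negSucc n =>
    exact ((backStep.iterate_right (n + 1)).eq p).trans (congrFun (Function.iterate_id _) _)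

lemma gaussHamMod_le_gaussHam (p : ES d × ES d) : gaussHamMod h p ≤ gaussHam p := by
  rw [gaussHamMod, gaussHam]
  nlinarith [sq_nonneg h, sq_nonneg ‖p.1‖]

lemma one_sub_mul_gaussHam_le_gaussHamMod (p : ES d × ES d) :
    (1 - h ^ 2 / 4) * gaussHam p ≤ gaussHamMod h p := by
  rw [gaussHamMod, gaussHam]
  nlinarith [sq_nonneg h, sq_nonneg ‖p.2‖]

end GaussLeapfrog

/-- For the standard normal target and `h ∈ (0,2)`, the Hamiltonian along the
two-sided leapfrog path through `(θ,ρ)` satisfies, uniformly in `i ∈ ℤ`,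
`((1 − h²/4)|θ|² + |ρ|²)/2 ≤ H(Φ_h^i(θ,ρ)) ≤ (|θ|² + (1 − h²/4)⁻¹|ρ|²)/2`. -/
theorem gaussHam_bounds_along_path {d : ℕ} (h : ℝ) (h0 : 0 < h) (h2 : h < 2)
    (p : ES d × ES d) :
    ∀ i : ℤ,
      (1 / 2) * ((1 - h ^ 2 / 4) * ‖p.1‖ ^ 2 + ‖p.2‖ ^ 2) ≤
          gaussHam (gaussLeapfrogIter h i p) ∧
      gaussHam (gaussLeapfrogIter h i p) ≤
          (1 / 2) * (‖p.1‖ ^ 2 + (1 - h ^ 2 / 4)⁻¹ * ‖p.2‖ ^ 2) := by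
  intro i
  have hc : 0 < 1 - h ^ 2 / 4 := by nlinarith
  have hmod : gaussHamMod h p = (1 / 2) * ((1 - h ^ 2 / 4) * ‖p.1‖ ^ 2 + ‖p.2‖ ^ 2) := by
    rw [gaussHamMod]; ring
  have hinv : (1 / 2) * (‖p.1‖ ^ 2 + (1 - h ^ 2 / 4)⁻¹ * ‖p.2‖ ^ 2)
      = gaussHamMod h p / (1 - h ^ 2 / 4) := by
    rw [gaussHamMod, eq_div_iff hc.ne']
    linear_combination (1 / 2) * ‖p.2‖ ^ 2 * inv_mul_cancel₀ hc.ne'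
  have hconst := gaussHamMod_gaussLeapfrogIter h i p
  refine ⟨?_, ?_⟩
  · rw [← hmod, ← hconst]
    exact gaussHamMod_le_gaussHam h _
  · rw [hinv, le_div_iff₀ hc, ← hconst, mul_comm]
    exact one_sub_mul_gaussHam_le_gaussHamMod h _
end
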